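/- Define on Ap(M,Q) the operation w ⊕ w' = the unique element w'' of Ap(M,Q) such that w + w' ∈ w'' + ⟨Q⟩, where Q = {(c/gcd(a,c),0), (0,c/gcd(b,c))}. Then (Ap(M,Q), ⊕) is an abelian group isomorphic to ℤ/(c/(gcd(a,c)gcd(b,c)))ℤ. -/

import Mathlib

/-! Write `d₁ = gcd(a, c)`, `d₂ = gcd(b, c)` and `n = c / (d₁ d₂)`. Since the generators of `Q`
lie in `M` and `M` is cut out by a congruence, `m ∈ M` lies in `q + M` exactly when `q ≤ m`, so
`Ap(M, Q)` is the set of solutions of `c ∣ ax + by` in the box `x < c/d₁ = d₂ n`, `y < c/d₂`.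
As `a` is prime to `d₂`, every such `x` is a multiple of `d₂`, and for each multiple `x` of `d₂`
the congruence `by ≡ -ax (mod c)` has exactly one solution `y < c/d₂`. Hence `(x, y) ↦ x/d₂ mod n`
is a bijection `Ap(M, Q) → ℤ/nℤ`; it turns `⊕` into addition because first coordinates of
elements of `⟨Q⟩` are multiples of `c/d₁ = d₂ n`. -/

section LinearCongruence

variable {b c s : ℕ}

theorem exists_lt_div_gcd_dvd_mul_add (hc : 0 < c) (hs : Nat.gcd b c ∣ s) :
    ∃ y < c / Nat.gcd b c, c ∣ b * y + s := by
  set d := Nat.gcd b c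
  have hd : 0 < d := Nat.gcd_pos_of_pos_right b hc
  have hcop : Nat.Coprime (b / d) (c / d) := Nat.coprime_div_gcd_div_gcd hd
  have : NeZero (c / d) := ⟨(Nat.div_pos (Nat.gcd_le_right b hc) hd).ne'⟩
  let y : ZMod (c / d) := -((s / d : ℕ) : ZMod (c / d)) * ((b / d : ℕ) : ZMod (c / d))⁻¹
  have hy : c / d ∣ b / d * y.val + s / d := by
    rw [← ZMod.natCast_eq_zero_iff, Nat.cast_add, Nat.cast_mul, ZMod.natCast_zmod_val]
    linear_combination -((s / d : ℕ) : ZMod (c / d)) * ZMod.coe_mul_inv_eq_one _ hcop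
  refine ⟨y.val, ZMod.val_lt y, ?_⟩
  calc c = d * (c / d) := (Nat.mul_div_cancel' (Nat.gcd_dvd_right b c)).symm
    _ ∣ d * (b / d * y.val + s / d) := mul_dvd_mul_left d hy
    _ = b * y.val + s := by
      rw [mul_add, ← mul_assoc, Nat.mul_div_cancel' (Nat.gcd_dvd_left b c),
        Nat.mul_div_cancel' hs]

theorem eq_of_dvd_mul_add_of_lt_div_gcd {y y' : ℕ} (hc : 0 < c) (hy : y < c / Nat.gcd b c)
    (hy' : y' < c / Nat.gcd b c) (h : c ∣ b * y + s) (h' : c ∣ b * y' + s) : y = y' := by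
  have hmod : b * y ≡ b * y' [MOD c] := Nat.ModEq.add_right_cancel' s
    ((Nat.modEq_zero_iff_dvd.2 h).trans (Nat.modEq_zero_iff_dvd.2 h').symm)
  have hmod' := hmod.cancel_left_div_gcd hc
  rw [Nat.gcd_comm] at hmod'
  exact hmod'.eq_of_lt_of_lt hy hy'

end LinearCongruence

theorem dvd_fst_of_mem_closure {k l : ℕ} {f : ℕ × ℕ}
    (hf : f ∈ AddSubmonoid.closure ({(k, 0), (0, l)} : Set (ℕ × ℕ))) : k ∣ f.1 := by
  induction hf using AddSubmonoid.closure_induction with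
  | mem q hq =>
    rcases hq with rfl | rfl
    · exact dvd_rfl
    · exact dvd_zero k
  | zero => exact dvd_zero k
  | add x y _ _ hx hy => exact dvd_add hx hy

theorem natCast_div_eq_add_of_add_eq {d n x x' x'' f : ℕ} (hd : 0 < d) (hx : d ∣ x)
    (hx' : d ∣ x') (hx'' : d ∣ x'') (hf : d * n ∣ f) (h : x + x' = x'' + f) :
    ((x'' / d : ℕ) : ZMod n) = (x / d : ℕ) + (x' / d : ℕ) := by
  obtain ⟨u, rfl⟩ := hx
  obtain ⟨u', rfl⟩ := hx'
  obtain ⟨u'', rfl⟩ := hx''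
  obtain ⟨k, rfl⟩ := hf
  have hu : u + u' = u'' + n * k :=
    Nat.eq_of_mul_eq_mul_left hd (by rw [mul_add, mul_add, ← mul_assoc, h])
  simp only [Nat.mul_div_cancel_left _ hd]
  rw [← Nat.cast_add, hu, Nat.cast_add, Nat.cast_mul, ZMod.natCast_self, zero_mul, add_zero]

theorem dvd_mul_div_gcd (a c : ℕ) : c ∣ a * (c / Nat.gcd a c) :=
  Nat.mul_div_assoc a (Nat.gcd_dvd_right a c) ▸ Nat.dvd_lcm_right a c

section Apery

variable {a b c : ℕ}

theorem exists_dvd_eq_add_iff_le {m q : ℕ × ℕ} (hm : c ∣ a * m.1 + b * m.2)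
    (hq : c ∣ a * q.1 + b * q.2) :
    (∃ y : ℕ × ℕ, c ∣ a * y.1 + b * y.2 ∧ m = q + y) ↔ q ≤ m := by
  refine ⟨fun ⟨y, _, hy⟩ => hy ▸ le_add_right le_rfl, fun hle => ?_⟩
  obtain ⟨y, rfl⟩ := exists_add_of_le hle
  refine ⟨y, ?_, rfl⟩
  have hsum : a * (q + y).1 + b * (q + y).2 = (a * q.1 + b * q.2) + (a * y.1 + b * y.2) := by
    simp only [Prod.fst_add, Prod.snd_add]
    ring
  exact (Nat.dvd_add_right hq).mp (hsum ▸ hm)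

def aperySet (a b c : ℕ) : Set (ℕ × ℕ) :=
  {m | c ∣ a * m.1 + b * m.2 ∧ m.1 < c / Nat.gcd a c ∧ m.2 < c / Nat.gcd b c}

theorem apery_eq_aperySet :
    {m | m ∈ {p : ℕ × ℕ | c ∣ a * p.1 + b * p.2} ∧
      ∀ q ∈ ({(c / Nat.gcd a c, 0), (0, c / Nat.gcd b c)} : Set (ℕ × ℕ)),
        ¬ ∃ y ∈ {p : ℕ × ℕ | c ∣ a * p.1 + b * p.2}, m = q + y} = aperySet a b c := by
  ext m
  simp only [Set.mem_ofPred_eq, Set.mem_insert_iff, Set.mem_singleton_iff, forall_eq_or_imp,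
    forall_eq]
  refine and_congr_right fun hm => ?_
  rw [exists_dvd_eq_add_iff_le hm (by simpa using dvd_mul_div_gcd a c),
    exists_dvd_eq_add_iff_le hm (by simpa using dvd_mul_div_gcd b c)]
  simp [Prod.le_def]

theorem gcd_dvd_fst_of_dvd (hcop : Nat.Coprime a (Nat.gcd b c)) {x y : ℕ}
    (h : c ∣ a * x + b * y) : Nat.gcd b c ∣ x := by
  have hsum : Nat.gcd b c ∣ a * x + b * y := (Nat.gcd_dvd_right b c).trans h
  have hax : Nat.gcd b c ∣ a * x :=
    (Nat.dvd_add_left (dvd_mul_of_dvd_left (Nat.gcd_dvd_left b c) y)).mp hsum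
  exact hcop.symm.dvd_of_dvd_mul_left hax

theorem gcd_mul_gcd_dvd (hcop : Nat.Coprime a (Nat.gcd b c)) : Nat.gcd a c * Nat.gcd b c ∣ c :=
  (hcop.coprime_dvd_left (Nat.gcd_dvd_left a c)).mul_dvd_of_dvd_of_dvd
    (Nat.gcd_dvd_right a c) (Nat.gcd_dvd_right b c)

theorem div_gcd_eq_gcd_mul (hcop : Nat.Coprime a (Nat.gcd b c)) :
    c / Nat.gcd a c = Nat.gcd b c * (c / (Nat.gcd a c * Nat.gcd b c)) := by
  rw [← Nat.div_div_eq_div_mul,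
    Nat.mul_div_cancel' (Nat.dvd_div_of_mul_dvd (gcd_mul_gcd_dvd hcop))]

def aperyIndex (a b c : ℕ) (m : ℕ × ℕ) : ZMod (c / (Nat.gcd a c * Nat.gcd b c)) :=
  ((m.1 / Nat.gcd b c : ℕ) : ZMod _)

theorem aperyIndex_injOn (hcop : Nat.Coprime a (Nat.gcd b c)) (hc : 0 < c) :
    Set.InjOn (aperyIndex a b c) (aperySet a b c) := by
  rintro m ⟨hm, hm₁, hm₂⟩ m' ⟨hm', hm'₁, hm'₂⟩ h
  have hlt : ∀ x < c / Nat.gcd a c, x / Nat.gcd b c < c / (Nat.gcd a c * Nat.gcd b c) :=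
    fun x hx => Nat.div_lt_of_lt_mul (div_gcd_eq_gcd_mul hcop ▸ hx)
  have hq : m.1 / Nat.gcd b c = m'.1 / Nat.gcd b c := by
    rwa [aperyIndex, aperyIndex, ZMod.natCast_eq_natCast_iff', Nat.mod_eq_of_lt (hlt _ hm₁),
      Nat.mod_eq_of_lt (hlt _ hm'₁)] at h
  have h₁ : m.1 = m'.1 := by
    rw [← Nat.div_mul_cancel (gcd_dvd_fst_of_dvd hcop hm),
      ← Nat.div_mul_cancel (gcd_dvd_fst_of_dvd hcop hm'), hq]
  have h₂ : m.2 = m'.2 := eq_of_dvd_mul_add_of_lt_div_gcd (s := a * m.1) hc hm₂ hm'₂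
    (by rwa [add_comm]) (by rwa [add_comm, h₁])
  exact Prod.ext h₁ h₂

theorem aperyIndex_surjOn (hcop : Nat.Coprime a (Nat.gcd b c)) (hc : 0 < c) :
    Set.SurjOn (aperyIndex a b c) (aperySet a b c) Set.univ := by
  intro t _
  have hd : 0 < Nat.gcd b c := Nat.gcd_pos_of_pos_right b hc
  have : NeZero (c / (Nat.gcd a c * Nat.gcd b c)) :=
    ⟨(Nat.div_pos (Nat.le_of_dvd hc (gcd_mul_gcd_dvd hcop))
      (Nat.mul_pos (Nat.gcd_pos_of_pos_right a hc) hd)).ne'⟩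
  obtain ⟨y, hy, hdvd⟩ := exists_lt_div_gcd_dvd_mul_add (s := a * (Nat.gcd b c * t.val)) hc
    (dvd_mul_of_dvd_right (dvd_mul_right _ _) a)
  refine ⟨(Nat.gcd b c * t.val, y), ⟨by rwa [add_comm], ?_, hy⟩, ?_⟩
  · rw [div_gcd_eq_gcd_mul hcop]
    exact Nat.mul_lt_mul_of_pos_left (ZMod.val_lt t) hd
  · simp [aperyIndex, Nat.mul_div_cancel_left _ hd]

noncomputable def aperyEquiv (hcop : Nat.Coprime a (Nat.gcd b c)) (hc : 0 < c) :
    aperySet a b c ≃ ZMod (c / (Nat.gcd a c * Nat.gcd b c)) :=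
  Equiv.ofBijective (fun m => aperyIndex a b c m)
    ⟨(aperyIndex_injOn hcop hc).injective, fun t =>
      let ⟨m, hm, h⟩ := aperyIndex_surjOn hcop hc (Set.mem_univ t); ⟨⟨m, hm⟩, h⟩⟩

theorem aperyIndex_eq_add_of_add_eq (hcop : Nat.Coprime a (Nat.gcd b c)) (hc : 0 < c)
    {w w' w'' f : ℕ × ℕ} (hw : w ∈ aperySet a b c) (hw' : w' ∈ aperySet a b c)
    (hw'' : w'' ∈ aperySet a b c)
    (hf : f ∈ AddSubmonoid.closure
      ({(c / Nat.gcd a c, 0), (0, c / Nat.gcd b c)} : Set (ℕ × ℕ)))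
    (h : w + w' = w'' + f) :
    aperyIndex a b c w'' = aperyIndex a b c w + aperyIndex a b c w' :=
  natCast_div_eq_add_of_add_eq (Nat.gcd_pos_of_pos_right b hc) (gcd_dvd_fst_of_dvd hcop hw.1)
    (gcd_dvd_fst_of_dvd hcop hw'.1) (gcd_dvd_fst_of_dvd hcop hw''.1)
    (div_gcd_eq_gcd_mul hcop ▸ dvd_fst_of_mem_closure hf) (congrArg Prod.fst h)

end Apery

theorem stmt_18_general (a b c : ℕ) (hc : 0 < c)
    (hgcd : Nat.gcd a (Nat.gcd b c) = 1)
    (M : Set (ℕ × ℕ)) (hM : M = {p | c ∣ a * p.1 + b * p.2})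
    (q₁ q₂ : ℕ × ℕ) (hq₁ : q₁ = (c / Nat.gcd a c, 0)) (hq₂ : q₂ = (0, c / Nat.gcd b c))
    (Ap : Set (ℕ × ℕ))
    (hAp : Ap = {m | m ∈ M ∧ ∀ q ∈ ({q₁, q₂} : Set (ℕ × ℕ)), ¬ ∃ y ∈ M, m = q + y}) :
    ∃ e : Ap ≃ ZMod (c / (Nat.gcd a c * Nat.gcd b c)),
      ∀ w w' w'' : Ap,
        (∃ f ∈ AddSubmonoid.closure ({q₁, q₂} : Set (ℕ × ℕ)),
          (w : ℕ × ℕ) + (w' : ℕ × ℕ) = (w'' : ℕ × ℕ) + f) →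
        e w'' = e w + e w' := by
  subst hM hq₁ hq₂
  obtain rfl : Ap = aperySet a b c := hAp.trans apery_eq_aperySet
  exact ⟨aperyEquiv hgcd hc, fun w w' w'' ⟨f, hf, h⟩ =>
    aperyIndex_eq_add_of_add_eq hgcd hc w.2 w'.2 w''.2 hf h⟩

/-- The Apéry set of `M = {(x,y) ∈ ℕ² : c ∣ ax + by}` with respect to
`Q = {(c/gcd(a,c),0), (0,c/gcd(b,c))}`, endowed with the operation `w ⊕ w' :=` the unique
`w'' ∈ Ap(M,Q)` with `w + w' ∈ w'' + ⟨Q⟩`, is an abelian group isomorphic to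
`ℤ/(c/(gcd(a,c)gcd(b,c)))ℤ`.  This is expressed by a bijection `e` from the Apéry set to
`ZMod (c/(gcd(a,c)gcd(b,c)))` transporting `⊕` to addition. -/
theorem stmt_18 (a b c : ℕ) (hc : 0 < c) (ha : 1 ≤ a) (ha' : a < c) (hb : 1 ≤ b) (hb' : b < c)
    (hgcd : Nat.gcd a (Nat.gcd b c) = 1)
    (M : Set (ℕ × ℕ)) (hM : M = {p | c ∣ a * p.1 + b * p.2})
    (q₁ q₂ : ℕ × ℕ) (hq₁ : q₁ = (c / Nat.gcd a c, 0)) (hq₂ : q₂ = (0, c / Nat.gcd b c))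
    (Ap : Set (ℕ × ℕ))
    (hAp : Ap = {m | m ∈ M ∧ ∀ q ∈ ({q₁, q₂} : Set (ℕ × ℕ)), ¬ ∃ y ∈ M, m = q + y}) :
    ∃ e : Ap ≃ ZMod (c / (Nat.gcd a c * Nat.gcd b c)),
      ∀ w w' w'' : Ap,
        (∃ f ∈ AddSubmonoid.closure ({q₁, q₂} : Set (ℕ × ℕ)),
          (w : ℕ × ℕ) + (w' : ℕ × ℕ) = (w'' : ℕ × ℕ) + f) →
        e w'' = e w + e w' :=
  stmt_18_general a b c hc hgcd M hM q₁ q₂ hq₁ hq₂ Ap hAp
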